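/- arXiv:1803.00966 — 3 statements merged into one kernel-verified Lean document; each statement's English description precedes it below -/
import Mathlib

section
/- Let u, v : [-L, L] → ℂ be C^1 with u(x) = v(x) = 0 for x ∈ Γ_D, and define the sesquilinear form B_{a,c}(u, v) = ∫_{-L}^{L} ( a u' conj(v') − (ω/c)² u conj(v) ) − iω Σ_{x∈Γ_N} β(x) u(x) conj(v(x)). Then there is a constant C_{a,c}, depending only on L, a_min, c_max, ω_0 and β_max (and independent of ω, u, v), such that |B_{a,c}(u, v)| ≤ C_{a,c} ‖u‖_{ℋ,a,c} ‖v‖_{ℋ,a,c} for all such u, v and all ω ≥ ω_0; one may take C_{a,c} = 3 + (C_trace²/2) max{ 1/a_min, c_max² (1/ω_0² + β_max²) }, where C_trace is any constant for which the 1D multiplicative trace inequality |w(-L)|² + |w(L)|² ≤ C_trace² ‖w‖_{L²} ( ‖w‖²_{L²} + ‖w'‖²_{L²} )^{1/2} holds for all C^1 functions w on [-L, L]. -/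
open MeasureTheory

private lemma sqrt_mul_sqrt_le_half {x y : ℝ} (hx : 0 ≤ x) (hy : 0 ≤ y) :
    Real.sqrt x * Real.sqrt y ≤ (x + y) / 2 := by
  nlinarith [Real.sq_sqrt hx, Real.sq_sqrt hy, sq_nonneg (Real.sqrt x - Real.sqrt y),
    Real.sqrt_nonneg x, Real.sqrt_nonneg y]

private lemma integrable_of_bdd_on {E : Type*} [NormedAddCommGroup E] {s : Set ℝ}
    (hs : MeasurableSet s) (hfin : volume s < ⊤) {f : ℝ → E}
    (hf : AEStronglyMeasurable f (volume.restrict s)) {C : ℝ}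
    (hC : ∀ x ∈ s, ‖f x‖ ≤ C) : Integrable f (volume.restrict s) := by
  haveI : IsFiniteMeasure (volume.restrict s) :=
    ⟨by rwa [Measure.restrict_apply_univ]⟩
  exact memLp_one_iff_integrable.mp
    (MemLp.of_bound hf C ((ae_restrict_iff' hs).mpr (ae_of_all _ hC)))

private lemma cs_integral {s : Set ℝ} (hs : MeasurableSet s) (hfin : volume s < ⊤)
    {F G : ℝ → ℝ} (hF : AEStronglyMeasurable F (volume.restrict s))
    (hG : AEStronglyMeasurable G (volume.restrict s))
    {CF CG : ℝ} (hCF : ∀ x ∈ s, ‖F x‖ ≤ CF) (hCG : ∀ x ∈ s, ‖G x‖ ≤ CG)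
    (hFn : ∀ x ∈ s, 0 ≤ F x) (hGn : ∀ x ∈ s, 0 ≤ G x) :
    ∫ x in s, F x * G x ≤
      Real.sqrt (∫ x in s, F x ^ 2) * Real.sqrt (∫ x in s, G x ^ 2) := by
  haveI : IsFiniteMeasure (volume.restrict s) :=
    ⟨by rwa [Measure.restrict_apply_univ]⟩
  have hpq : Real.HolderConjugate 2 2 := Real.HolderConjugate.two_two
  have hF2 : MemLp F (ENNReal.ofReal 2) (volume.restrict s) :=
    MemLp.of_bound hF CF ((ae_restrict_iff' hs).mpr (ae_of_all _ hCF))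
  have hG2 : MemLp G (ENNReal.ofReal 2) (volume.restrict s) :=
    MemLp.of_bound hG CG ((ae_restrict_iff' hs).mpr (ae_of_all _ hCG))
  have hFn' : 0 ≤ᵐ[volume.restrict s] F :=
    (ae_restrict_iff' hs).mpr (ae_of_all _ hFn)
  have hGn' : 0 ≤ᵐ[volume.restrict s] G :=
    (ae_restrict_iff' hs).mpr (ae_of_all _ hGn)
  have h := integral_mul_le_Lp_mul_Lq_of_nonneg hpq hFn' hGn' hF2 hG2
  have h2 : ∀ H : ℝ → ℝ, (∫ x in s, H x ^ (2 : ℝ)) = ∫ x in s, H x ^ 2 := by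
    intro H
    refine integral_congr_ae (ae_of_all _ fun x => ?_)
    show H x ^ (2 : ℝ) = H x ^ 2
    rw [show (2 : ℝ) = ((2 : ℕ) : ℝ) by norm_num, Real.rpow_natCast]
  rw [h2 F, h2 G] at h
  calc ∫ x in s, F x * G x ≤ _ := h
    _ = _ := by
        rw [← Real.sqrt_eq_rpow, ← Real.sqrt_eq_rpow]

private lemma mul_bound4 {p q P Q : ℝ} (hp : 0 ≤ p) (hq : 0 ≤ q) (hP : p ≤ P) (hQ : q ≤ Q) :
    p * q ≤ P * Q := mul_le_mul hP hQ hq (le_trans hp hP)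

set_option maxHeartbeats 1000000 in
/-- continuity of the sesquilinear form, Theorem `thm:wp` (i) in 1D:
for `C¹` functions `u, v` on `[-L, L]` vanishing on `Γ_D`, the Helmholtz sesquilinear
form `B_{a,c}(u,v) = ∫ (a u' conj(v') − (ω/c)² u conj(v)) − iω ∑_{x∈Γ_N} β(x) u(x) conj(v(x))`
satisfies `|B_{a,c}(u,v)| ≤ C_{a,c} ‖u‖_{ℋ,a,c} ‖v‖_{ℋ,a,c}` with
`C_{a,c} = 3 + (C²_trace/2) max{1/a_min, c_max²(1/ω_0² + β_max²)}`, where `C_trace` is any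
constant for which the 1D multiplicative trace inequality holds. -/
theorem stmt17 (L : ℝ) (hL : 0 < L) (ω ω0 : ℝ) (hω0 : 0 < ω0) (hω : ω0 ≤ ω)
    (amin amax cmin cmax βmax : ℝ) (hamin : 0 < amin) (hamax : amin ≤ amax)
    (hcmin : 0 < cmin) (hcmax : cmin ≤ cmax) (hβmax : 0 < βmax)
    (a c : ℝ → ℝ) (hameas : Measurable a) (hcmeas : Measurable c)
    (ha : ∀ x ∈ Set.Icc (-L) L, amin ≤ a x ∧ a x ≤ amax)
    (hc : ∀ x ∈ Set.Icc (-L) L, cmin ≤ c x ∧ c x ≤ cmax)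
    (ΓN ΓD : Finset ℝ) (hΓ : ΓN ∪ ΓD = {-L, L}) (hdisj : Disjoint ΓN ΓD)
    (β : ℝ → ℝ) (hβ : ∀ x ∈ ΓN, 0 ≤ β x ∧ β x ≤ βmax)
    (Ctrace : ℝ)
    (htrace : ∀ (v v' : ℝ → ℂ), (∀ x ∈ Set.Icc (-L) L, HasDerivAt v (v' x) x) →
      ContinuousOn v' (Set.Icc (-L) L) →
      ‖v (-L)‖^2 + ‖v L‖^2 ≤ Ctrace^2 * Real.sqrt (∫ x in (-L)..L, ‖v x‖^2)
        * Real.sqrt ((∫ x in (-L)..L, ‖v x‖^2) + ∫ x in (-L)..L, ‖v' x‖^2))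
    (u u' v v' : ℝ → ℂ)
    (hu : ∀ x ∈ Set.Icc (-L) L, HasDerivAt u (u' x) x)
    (hu' : ContinuousOn u' (Set.Icc (-L) L))
    (hv : ∀ x ∈ Set.Icc (-L) L, HasDerivAt v (v' x) x)
    (hv' : ContinuousOn v' (Set.Icc (-L) L))
    (huD : ∀ x ∈ ΓD, u x = 0) (hvD : ∀ x ∈ ΓD, v x = 0) :
    ‖(∫ x in (-L)..L, ((a x : ℝ) : ℂ) * u' x * (starRingEnd ℂ) (v' x)
          - ((ω / c x : ℝ) : ℂ)^2 * u x * (starRingEnd ℂ) (v x))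
        - Complex.I * (ω : ℂ) * ∑ x ∈ ΓN, ((β x : ℝ) : ℂ) * u x * (starRingEnd ℂ) (v x)‖
      ≤ (3 + Ctrace^2 / 2 * max (1/amin) (cmax^2 * (1/ω0^2 + βmax^2)))
        * Real.sqrt ((∫ x in (-L)..L, a x * ‖u' x‖^2)
            + ∫ x in (-L)..L, (ω / c x)^2 * ‖u x‖^2)
        * Real.sqrt ((∫ x in (-L)..L, a x * ‖v' x‖^2)
            + ∫ x in (-L)..L, (ω / c x)^2 * ‖v x‖^2) := by
  have hLL : -L ≤ L := by linarith
  have hωpos : (0:ℝ) < ω := lt_of_lt_of_le hω0 hω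
  have hS : MeasurableSet (Set.Ioc (-L) L) := measurableSet_Ioc
  have hfin : volume (Set.Ioc (-L) L) < ⊤ := measure_Ioc_lt_top
  have hsub : Set.Ioc (-L) L ⊆ Set.Icc (-L) L := Set.Ioc_subset_Icc_self
  have hLmem : L ∈ Set.Icc (-L) L := by constructor <;> linarith
  have hucont : ContinuousOn u (Set.Icc (-L) L) := fun x hx =>
    (hu x hx).continuousAt.continuousWithinAt
  have hvcont : ContinuousOn v (Set.Icc (-L) L) := fun x hx =>
    (hv x hx).continuousAt.continuousWithinAt
  obtain ⟨Bu, hBu⟩ := isCompact_Icc.exists_bound_of_continuousOn hucont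
  obtain ⟨Bu', hBu'⟩ := isCompact_Icc.exists_bound_of_continuousOn hu'
  obtain ⟨Bv, hBv⟩ := isCompact_Icc.exists_bound_of_continuousOn hvcont
  obtain ⟨Bv', hBv'⟩ := isCompact_Icc.exists_bound_of_continuousOn hv'
  have hBu0 : 0 ≤ Bu := le_trans (norm_nonneg _) (hBu L hLmem)
  have hBu'0 : 0 ≤ Bu' := le_trans (norm_nonneg _) (hBu' L hLmem)
  have hBv0 : 0 ≤ Bv := le_trans (norm_nonneg _) (hBv L hLmem)
  have hBv'0 : 0 ≤ Bv' := le_trans (norm_nonneg _) (hBv' L hLmem)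
  have hapos : ∀ x ∈ Set.Icc (-L) L, 0 ≤ a x := fun x hx => le_trans hamin.le (ha x hx).1
  have hcpos : ∀ x ∈ Set.Icc (-L) L, 0 < c x := fun x hx => lt_of_lt_of_le hcmin (hc x hx).1
  have hocn : ∀ x ∈ Set.Icc (-L) L, 0 ≤ ω / c x := fun x hx =>
    div_nonneg hωpos.le (hcpos x hx).le
  have hocb : ∀ x ∈ Set.Icc (-L) L, ω / c x ≤ ω / cmin := fun x hx => by
    gcongr
    exact (hc x hx).1
  -- convert interval integrals to set integrals
  simp only [intervalIntegral.integral_of_le hLL]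
  set S := Set.Ioc (-L) L with hS_def
  set Du := ∫ x in S, a x * ‖u' x‖ ^ 2 with hDu_def
  set Nu := ∫ x in S, (ω / c x) ^ 2 * ‖u x‖ ^ 2 with hNu_def
  set Dv := ∫ x in S, a x * ‖v' x‖ ^ 2 with hDv_def
  set Nv := ∫ x in S, (ω / c x) ^ 2 * ‖v x‖ ^ 2 with hNv_def
  set M := max (1/amin) (cmax^2 * (1/ω0^2 + βmax^2)) with hM_def
  have hM1 : 1/amin ≤ M := le_max_left _ _
  have hM0 : 0 ≤ M := le_trans (by positivity) hM1
  have hM2 : βmax^2 * cmax^2 + cmax^2/ω^2 ≤ M := by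
    have h1 : cmax^2/ω^2 ≤ cmax^2/ω0^2 :=
      div_le_div_of_nonneg_left (by positivity) (by positivity)
        (pow_le_pow_left₀ hω0.le hω 2)
    refine le_trans ?_ (le_max_right _ _)
    have h2 : cmax^2 * (1/ω0^2 + βmax^2) = cmax^2/ω0^2 + βmax^2 * cmax^2 := by ring
    linarith
  have hk0 : 0 ≤ Ctrace^2/2 * M := by positivity
  -- nonnegativity of energies
  have hDu0 : 0 ≤ Du := setIntegral_nonneg hS fun x hx =>
    mul_nonneg (hapos x (hsub hx)) (sq_nonneg _)
  have hNu0 : 0 ≤ Nu := setIntegral_nonneg hS fun x hx =>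
    mul_nonneg (sq_nonneg _) (sq_nonneg _)
  have hDv0 : 0 ≤ Dv := setIntegral_nonneg hS fun x hx =>
    mul_nonneg (hapos x (hsub hx)) (sq_nonneg _)
  have hNv0 : 0 ≤ Nv := setIntegral_nonneg hS fun x hx =>
    mul_nonneg (sq_nonneg _) (sq_nonneg _)
  -- integrability facts
  have hIg1 : Integrable (fun x => a x * (‖u' x‖ * ‖v' x‖)) (volume.restrict S) := by
    refine integrable_of_bdd_on hS hfin
      (hameas.aestronglyMeasurable.mul
        (((hu'.mono hsub).norm.mul ((hv'.mono hsub).norm)).aestronglyMeasurable hS))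
      (C := amax * (Bu' * Bv')) fun x hx => ?_
    have hx' := hsub hx
    rw [Real.norm_eq_abs, abs_of_nonneg (mul_nonneg (hapos x hx') (by positivity))]
    exact mul_bound4 (hapos x hx') (by positivity) (ha x hx').2
      (mul_bound4 (norm_nonneg _) (norm_nonneg _) (hBu' x hx') (hBv' x hx'))
  have hIg2 : Integrable (fun x => (ω / c x)^2 * (‖u x‖ * ‖v x‖)) (volume.restrict S) := by
    refine integrable_of_bdd_on hS hfin
      (((measurable_const.div hcmeas).pow_const 2).aestronglyMeasurable.mul
        (((hucont.mono hsub).norm.mul ((hvcont.mono hsub).norm)).aestronglyMeasurable hS))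
      (C := (ω/cmin)^2 * (Bu * Bv)) fun x hx => ?_
    have hx' := hsub hx
    rw [Real.norm_eq_abs, abs_of_nonneg (mul_nonneg (sq_nonneg _) (by positivity))]
    exact mul_bound4 (sq_nonneg _) (by positivity)
      (pow_le_pow_left₀ (hocn x hx') (hocb x hx') 2)
      (mul_bound4 (norm_nonneg _) (norm_nonneg _) (hBu x hx') (hBv x hx'))
  have hIu2 : Integrable (fun x => ‖u x‖^2) (volume.restrict S) := by
    refine integrable_of_bdd_on hS hfin
      (((hucont.mono hsub).norm.pow 2).aestronglyMeasurable hS) (C := Bu^2) fun x hx => ?_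
    have hx' := hsub hx
    rw [Real.norm_eq_abs, abs_of_nonneg (sq_nonneg _)]
    exact pow_le_pow_left₀ (norm_nonneg _) (hBu x hx') 2
  have hIv2 : Integrable (fun x => ‖v x‖^2) (volume.restrict S) := by
    refine integrable_of_bdd_on hS hfin
      (((hvcont.mono hsub).norm.pow 2).aestronglyMeasurable hS) (C := Bv^2) fun x hx => ?_
    have hx' := hsub hx
    rw [Real.norm_eq_abs, abs_of_nonneg (sq_nonneg _)]
    exact pow_le_pow_left₀ (norm_nonneg _) (hBv x hx') 2
  have hIu'2 : Integrable (fun x => ‖u' x‖^2) (volume.restrict S) := by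
    refine integrable_of_bdd_on hS hfin
      (((hu'.mono hsub).norm.pow 2).aestronglyMeasurable hS) (C := Bu'^2) fun x hx => ?_
    have hx' := hsub hx
    rw [Real.norm_eq_abs, abs_of_nonneg (sq_nonneg _)]
    exact pow_le_pow_left₀ (norm_nonneg _) (hBu' x hx') 2
  have hIv'2 : Integrable (fun x => ‖v' x‖^2) (volume.restrict S) := by
    refine integrable_of_bdd_on hS hfin
      (((hv'.mono hsub).norm.pow 2).aestronglyMeasurable hS) (C := Bv'^2) fun x hx => ?_
    have hx' := hsub hx
    rw [Real.norm_eq_abs, abs_of_nonneg (sq_nonneg _)]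
    exact pow_le_pow_left₀ (norm_nonneg _) (hBv' x hx') 2
  have hIau2 : Integrable (fun x => a x * ‖u' x‖^2) (volume.restrict S) := by
    refine integrable_of_bdd_on hS hfin
      (hameas.aestronglyMeasurable.mul (((hu'.mono hsub).norm.pow 2).aestronglyMeasurable hS))
      (C := amax * Bu'^2) fun x hx => ?_
    have hx' := hsub hx
    rw [Real.norm_eq_abs, abs_of_nonneg (mul_nonneg (hapos x hx') (sq_nonneg _))]
    exact mul_bound4 (hapos x hx') (sq_nonneg _) (ha x hx').2
      (pow_le_pow_left₀ (norm_nonneg _) (hBu' x hx') 2)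
  have hIav2 : Integrable (fun x => a x * ‖v' x‖^2) (volume.restrict S) := by
    refine integrable_of_bdd_on hS hfin
      (hameas.aestronglyMeasurable.mul (((hv'.mono hsub).norm.pow 2).aestronglyMeasurable hS))
      (C := amax * Bv'^2) fun x hx => ?_
    have hx' := hsub hx
    rw [Real.norm_eq_abs, abs_of_nonneg (mul_nonneg (hapos x hx') (sq_nonneg _))]
    exact mul_bound4 (hapos x hx') (sq_nonneg _) (ha x hx').2
      (pow_le_pow_left₀ (norm_nonneg _) (hBv' x hx') 2)
  have hIcu2 : Integrable (fun x => (ω / c x)^2 * ‖u x‖^2) (volume.restrict S) := by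
    refine integrable_of_bdd_on hS hfin
      (((measurable_const.div hcmeas).pow_const 2).aestronglyMeasurable.mul
        (((hucont.mono hsub).norm.pow 2).aestronglyMeasurable hS))
      (C := (ω/cmin)^2 * Bu^2) fun x hx => ?_
    have hx' := hsub hx
    rw [Real.norm_eq_abs, abs_of_nonneg (mul_nonneg (sq_nonneg _) (sq_nonneg _))]
    exact mul_bound4 (sq_nonneg _) (sq_nonneg _)
      (pow_le_pow_left₀ (hocn x hx') (hocb x hx') 2)
      (pow_le_pow_left₀ (norm_nonneg _) (hBu x hx') 2)
  have hIcv2 : Integrable (fun x => (ω / c x)^2 * ‖v x‖^2) (volume.restrict S) := by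
    refine integrable_of_bdd_on hS hfin
      (((measurable_const.div hcmeas).pow_const 2).aestronglyMeasurable.mul
        (((hvcont.mono hsub).norm.pow 2).aestronglyMeasurable hS))
      (C := (ω/cmin)^2 * Bv^2) fun x hx => ?_
    have hx' := hsub hx
    rw [Real.norm_eq_abs, abs_of_nonneg (mul_nonneg (sq_nonneg _) (sq_nonneg _))]
    exact mul_bound4 (sq_nonneg _) (sq_nonneg _)
      (pow_le_pow_left₀ (hocn x hx') (hocb x hx') 2)
      (pow_le_pow_left₀ (norm_nonneg _) (hBv x hx') 2)
  -- volume term: pointwise bound on the complex integrand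
  have hptw : ∀ x ∈ S, ‖((a x : ℝ) : ℂ) * u' x * (starRingEnd ℂ) (v' x)
      - ((ω / c x : ℝ) : ℂ)^2 * u x * (starRingEnd ℂ) (v x)‖
      ≤ a x * (‖u' x‖ * ‖v' x‖) + (ω / c x)^2 * (‖u x‖ * ‖v x‖) := by
    intro x hx
    have hx' := hsub hx
    have e1 : ‖((a x : ℝ) : ℂ) * u' x * (starRingEnd ℂ) (v' x)‖
        = a x * (‖u' x‖ * ‖v' x‖) := by
      simp [norm_mul, Complex.norm_real, abs_of_nonneg (hapos x hx'), mul_assoc]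
    have e2 : ‖((ω / c x : ℝ) : ℂ)^2 * u x * (starRingEnd ℂ) (v x)‖
        = (ω / c x)^2 * (‖u x‖ * ‖v x‖) := by
      simp [norm_mul, norm_pow, Complex.norm_real, abs_div, abs_of_nonneg hωpos.le,
        abs_of_nonneg (hcpos x hx').le, sq_abs, mul_assoc]
    calc ‖_ - _‖ ≤ _ + _ := norm_sub_le _ _
      _ = _ := by rw [e1, e2]
  have hvol : ‖∫ x in S, ((a x : ℝ) : ℂ) * u' x * (starRingEnd ℂ) (v' x)
      - ((ω / c x : ℝ) : ℂ)^2 * u x * (starRingEnd ℂ) (v x)‖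
      ≤ (∫ x in S, a x * (‖u' x‖ * ‖v' x‖)) + ∫ x in S, (ω / c x)^2 * (‖u x‖ * ‖v x‖) := by
    refine le_trans (norm_integral_le_of_norm_le (hIg1.add hIg2)
      ((ae_restrict_iff' hS).mpr (ae_of_all _ hptw))) (le_of_eq ?_)
    exact integral_add hIg1 hIg2
  -- Cauchy-Schwarz for the two volume pieces
  have key_a : (∫ x in S, a x * (‖u' x‖ * ‖v' x‖)) ≤ Real.sqrt Du * Real.sqrt Dv := by
    have h1 : (∫ x in S, a x * (‖u' x‖ * ‖v' x‖))
        = ∫ x in S, (Real.sqrt (a x) * ‖u' x‖) * (Real.sqrt (a x) * ‖v' x‖) :=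
      setIntegral_congr_fun hS fun x hx => by
        rw [show (Real.sqrt (a x) * ‖u' x‖) * (Real.sqrt (a x) * ‖v' x‖)
          = (Real.sqrt (a x) * Real.sqrt (a x)) * (‖u' x‖ * ‖v' x‖) by ring,
          Real.mul_self_sqrt (hapos x (hsub hx))]
    have eFu : (∫ x in S, (Real.sqrt (a x) * ‖u' x‖)^2) = Du := by
      rw [hDu_def]
      exact setIntegral_congr_fun hS fun x hx => by
        rw [mul_pow, Real.sq_sqrt (hapos x (hsub hx))]
    have eFv : (∫ x in S, (Real.sqrt (a x) * ‖v' x‖)^2) = Dv := by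
      rw [hDv_def]
      exact setIntegral_congr_fun hS fun x hx => by
        rw [mul_pow, Real.sq_sqrt (hapos x (hsub hx))]
    have h2 := cs_integral hS hfin
      (F := fun x => Real.sqrt (a x) * ‖u' x‖) (G := fun x => Real.sqrt (a x) * ‖v' x‖)
      ((Real.continuous_sqrt.measurable.comp hameas).aestronglyMeasurable.mul
        ((hu'.mono hsub).norm.aestronglyMeasurable hS))
      ((Real.continuous_sqrt.measurable.comp hameas).aestronglyMeasurable.mul
        ((hv'.mono hsub).norm.aestronglyMeasurable hS))
      (CF := Real.sqrt amax * Bu') (CG := Real.sqrt amax * Bv')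
      (fun x hx => by
        have hx' := hsub hx
        rw [Real.norm_eq_abs, abs_of_nonneg (by positivity)]
        exact mul_bound4 (Real.sqrt_nonneg _) (norm_nonneg _)
          (Real.sqrt_le_sqrt (ha x hx').2) (hBu' x hx'))
      (fun x hx => by
        have hx' := hsub hx
        rw [Real.norm_eq_abs, abs_of_nonneg (by positivity)]
        exact mul_bound4 (Real.sqrt_nonneg _) (norm_nonneg _)
          (Real.sqrt_le_sqrt (ha x hx').2) (hBv' x hx'))
      (fun x hx => by positivity) (fun x hx => by positivity)
    rw [h1]
    calc (∫ x in S, (Real.sqrt (a x) * ‖u' x‖) * (Real.sqrt (a x) * ‖v' x‖))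
        ≤ Real.sqrt (∫ x in S, (Real.sqrt (a x) * ‖u' x‖)^2)
          * Real.sqrt (∫ x in S, (Real.sqrt (a x) * ‖v' x‖)^2) := h2
      _ = Real.sqrt Du * Real.sqrt Dv := by rw [eFu, eFv]
  have key_c : (∫ x in S, (ω / c x)^2 * (‖u x‖ * ‖v x‖)) ≤ Real.sqrt Nu * Real.sqrt Nv := by
    have h1 : (∫ x in S, (ω / c x)^2 * (‖u x‖ * ‖v x‖))
        = ∫ x in S, ((ω / c x) * ‖u x‖) * ((ω / c x) * ‖v x‖) :=
      setIntegral_congr_fun hS fun x hx => by ring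
    have eFu : (∫ x in S, ((ω / c x) * ‖u x‖)^2) = Nu := by
      rw [hNu_def]
      exact setIntegral_congr_fun hS fun x hx => by rw [mul_pow]
    have eFv : (∫ x in S, ((ω / c x) * ‖v x‖)^2) = Nv := by
      rw [hNv_def]
      exact setIntegral_congr_fun hS fun x hx => by rw [mul_pow]
    have h2 := cs_integral hS hfin
      (F := fun x => (ω / c x) * ‖u x‖) (G := fun x => (ω / c x) * ‖v x‖)
      ((measurable_const.div hcmeas).aestronglyMeasurable.mul
        ((hucont.mono hsub).norm.aestronglyMeasurable hS))
      ((measurable_const.div hcmeas).aestronglyMeasurable.mul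
        ((hvcont.mono hsub).norm.aestronglyMeasurable hS))
      (CF := (ω/cmin) * Bu) (CG := (ω/cmin) * Bv)
      (fun x hx => by
        have hx' := hsub hx
        rw [Real.norm_eq_abs, abs_of_nonneg (mul_nonneg (hocn x hx') (norm_nonneg _))]
        exact mul_bound4 (hocn x hx') (norm_nonneg _) (hocb x hx') (hBu x hx'))
      (fun x hx => by
        have hx' := hsub hx
        rw [Real.norm_eq_abs, abs_of_nonneg (mul_nonneg (hocn x hx') (norm_nonneg _))]
        exact mul_bound4 (hocn x hx') (norm_nonneg _) (hocb x hx') (hBv x hx'))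
      (fun x hx => mul_nonneg (hocn x (hsub hx)) (norm_nonneg _))
      (fun x hx => mul_nonneg (hocn x (hsub hx)) (norm_nonneg _))
    rw [h1]
    calc (∫ x in S, ((ω / c x) * ‖u x‖) * ((ω / c x) * ‖v x‖))
        ≤ Real.sqrt (∫ x in S, ((ω / c x) * ‖u x‖)^2)
          * Real.sqrt (∫ x in S, ((ω / c x) * ‖v x‖)^2) := h2
      _ = Real.sqrt Nu * Real.sqrt Nv := by rw [eFu, eFv]
  -- boundary term
  have hΓsub : ΓN ⊆ ({-L, L} : Finset ℝ) := hΓ ▸ Finset.subset_union_left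
  have hne : (-L) ≠ L := by intro h; linarith
  set Su := ∑ x ∈ ΓN, β x * ‖u x‖^2 with hSu_def
  set Sv := ∑ x ∈ ΓN, β x * ‖v x‖^2 with hSv_def
  have hSu0 : 0 ≤ Su := Finset.sum_nonneg fun x hx => mul_nonneg (hβ x hx).1 (sq_nonneg _)
  have hSv0 : 0 ≤ Sv := Finset.sum_nonneg fun x hx => mul_nonneg (hβ x hx).1 (sq_nonneg _)
  have hSuT : Su ≤ βmax * (‖u (-L)‖^2 + ‖u L‖^2) := by
    calc Su ≤ ∑ x ∈ ΓN, βmax * ‖u x‖^2 :=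
        Finset.sum_le_sum fun x hx => mul_le_mul_of_nonneg_right (hβ x hx).2 (sq_nonneg _)
      _ ≤ ∑ x ∈ ({-L, L} : Finset ℝ), βmax * ‖u x‖^2 :=
        Finset.sum_le_sum_of_subset_of_nonneg hΓsub
          (fun x _ _ => mul_nonneg hβmax.le (sq_nonneg _))
      _ = βmax * (‖u (-L)‖^2 + ‖u L‖^2) := by rw [Finset.sum_pair hne]; ring
  have hSvT : Sv ≤ βmax * (‖v (-L)‖^2 + ‖v L‖^2) := by
    calc Sv ≤ ∑ x ∈ ΓN, βmax * ‖v x‖^2 :=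
        Finset.sum_le_sum fun x hx => mul_le_mul_of_nonneg_right (hβ x hx).2 (sq_nonneg _)
      _ ≤ ∑ x ∈ ({-L, L} : Finset ℝ), βmax * ‖v x‖^2 :=
        Finset.sum_le_sum_of_subset_of_nonneg hΓsub
          (fun x _ _ => mul_nonneg hβmax.le (sq_nonneg _))
      _ = βmax * (‖v (-L)‖^2 + ‖v L‖^2) := by rw [Finset.sum_pair hne]; ring
  -- discrete Cauchy-Schwarz
  have hsum : ‖∑ x ∈ ΓN, ((β x : ℝ) : ℂ) * u x * (starRingEnd ℂ) (v x)‖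
      ≤ ∑ x ∈ ΓN, β x * (‖u x‖ * ‖v x‖) := by
    refine (norm_sum_le _ _).trans (le_of_eq (Finset.sum_congr rfl fun x hx => ?_))
    simp [norm_mul, Complex.norm_real, abs_of_nonneg (hβ x hx).1, mul_assoc]
  have hCSd : (∑ x ∈ ΓN, β x * (‖u x‖ * ‖v x‖)) ≤ Real.sqrt Su * Real.sqrt Sv := by
    have hXeq : (∑ x ∈ ΓN, β x * (‖u x‖ * ‖v x‖))
        = ∑ x ∈ ΓN, (Real.sqrt (β x) * ‖u x‖) * (Real.sqrt (β x) * ‖v x‖) :=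
      Finset.sum_congr rfl fun x hx => by
        rw [show (Real.sqrt (β x) * ‖u x‖) * (Real.sqrt (β x) * ‖v x‖)
          = (Real.sqrt (β x) * Real.sqrt (β x)) * (‖u x‖ * ‖v x‖) by ring,
          Real.mul_self_sqrt (hβ x hx).1]
    have hX2 := Finset.sum_mul_sq_le_sq_mul_sq ΓN
      (fun x => Real.sqrt (β x) * ‖u x‖) (fun x => Real.sqrt (β x) * ‖v x‖)
    have e1 : (∑ x ∈ ΓN, (Real.sqrt (β x) * ‖u x‖)^2) = Su := by
      rw [hSu_def]
      exact Finset.sum_congr rfl fun x hx => by rw [mul_pow, Real.sq_sqrt (hβ x hx).1]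
    have e2 : (∑ x ∈ ΓN, (Real.sqrt (β x) * ‖v x‖)^2) = Sv := by
      rw [hSv_def]
      exact Finset.sum_congr rfl fun x hx => by rw [mul_pow, Real.sq_sqrt (hβ x hx).1]
    rw [e1, e2] at hX2
    have hX0 : 0 ≤ ∑ x ∈ ΓN, (Real.sqrt (β x) * ‖u x‖) * (Real.sqrt (β x) * ‖v x‖) :=
      Finset.sum_nonneg fun x hx => mul_nonneg (by positivity) (by positivity)
    rw [hXeq]
    calc (∑ x ∈ ΓN, (Real.sqrt (β x) * ‖u x‖) * (Real.sqrt (β x) * ‖v x‖))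
        = Real.sqrt ((∑ x ∈ ΓN, (Real.sqrt (β x) * ‖u x‖) * (Real.sqrt (β x) * ‖v x‖))^2) :=
          (Real.sqrt_sq hX0).symm
      _ ≤ Real.sqrt (Su * Sv) := Real.sqrt_le_sqrt hX2
      _ = Real.sqrt Su * Real.sqrt Sv := Real.sqrt_mul hSu0 _
  -- trace inequality
  have htr_u := htrace u u' hu hu'
  have htr_v := htrace v v' hv hv'
  simp only [intervalIntegral.integral_of_le hLL] at htr_u htr_v
  set nu := ∫ x in S, ‖u x‖^2 with hnu_def
  set du := ∫ x in S, ‖u' x‖^2 with hdu_def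
  set nv := ∫ x in S, ‖v x‖^2 with hnv_def
  set dv := ∫ x in S, ‖v' x‖^2 with hdv_def
  have hnu0 : 0 ≤ nu := setIntegral_nonneg hS fun x hx => sq_nonneg _
  have hnv0 : 0 ≤ nv := setIntegral_nonneg hS fun x hx => sq_nonneg _
  -- comparison of plain L² norms with weighted ones
  have hptnu : ∀ x ∈ S, ‖u x‖^2 ≤ cmax^2/ω^2 * ((ω / c x)^2 * ‖u x‖^2) := by
    intro x hx
    have hx' := hsub hx
    have hcx := hcpos x hx'
    have e : cmax^2/ω^2 * ((ω / c x)^2 * ‖u x‖^2) = (cmax^2/(c x)^2) * ‖u x‖^2 := by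
      field_simp
    rw [e]
    have h1 : (1:ℝ) ≤ cmax^2/(c x)^2 := by
      rw [le_div_iff₀ (by positivity), one_mul]
      exact pow_le_pow_left₀ (hcpos x hx').le (hc x hx').2 2
    exact le_mul_of_one_le_left (sq_nonneg _) h1
  have hnuN : nu ≤ cmax^2/ω^2 * Nu := by
    rw [hnu_def, hNu_def]
    exact le_trans (setIntegral_mono_on hIu2 (hIcu2.const_mul (cmax^2/ω^2)) hS hptnu)
      (le_of_eq (integral_const_mul _ _))
  have hptnv : ∀ x ∈ S, ‖v x‖^2 ≤ cmax^2/ω^2 * ((ω / c x)^2 * ‖v x‖^2) := by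
    intro x hx
    have hx' := hsub hx
    have hcx := hcpos x hx'
    have e : cmax^2/ω^2 * ((ω / c x)^2 * ‖v x‖^2) = (cmax^2/(c x)^2) * ‖v x‖^2 := by
      field_simp
    rw [e]
    have h1 : (1:ℝ) ≤ cmax^2/(c x)^2 := by
      rw [le_div_iff₀ (by positivity), one_mul]
      exact pow_le_pow_left₀ (hcpos x hx').le (hc x hx').2 2
    exact le_mul_of_one_le_left (sq_nonneg _) h1
  have hnvN : nv ≤ cmax^2/ω^2 * Nv := by
    rw [hnv_def, hNv_def]
    exact le_trans (setIntegral_mono_on hIv2 (hIcv2.const_mul (cmax^2/ω^2)) hS hptnv)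
      (le_of_eq (integral_const_mul _ _))
  have hptdu : ∀ x ∈ S, ‖u' x‖^2 ≤ 1/amin * (a x * ‖u' x‖^2) := by
    intro x hx
    have hx' := hsub hx
    have e : 1/amin * (a x * ‖u' x‖^2) = (a x/amin) * ‖u' x‖^2 := by ring
    rw [e]
    have h1 : (1:ℝ) ≤ a x/amin := by
      rw [le_div_iff₀ hamin, one_mul]
      exact (ha x hx').1
    exact le_mul_of_one_le_left (sq_nonneg _) h1
  have hduD : du ≤ 1/amin * Du := by
    rw [hdu_def, hDu_def]
    exact le_trans (setIntegral_mono_on hIu'2 (hIau2.const_mul (1/amin)) hS hptdu)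
      (le_of_eq (integral_const_mul _ _))
  have hptdv : ∀ x ∈ S, ‖v' x‖^2 ≤ 1/amin * (a x * ‖v' x‖^2) := by
    intro x hx
    have hx' := hsub hx
    have e : 1/amin * (a x * ‖v' x‖^2) = (a x/amin) * ‖v' x‖^2 := by ring
    rw [e]
    have h1 : (1:ℝ) ≤ a x/amin := by
      rw [le_div_iff₀ hamin, one_mul]
      exact (ha x hx').1
    exact le_mul_of_one_le_left (sq_nonneg _) h1
  have hdvD : dv ≤ 1/amin * Dv := by
    rw [hdv_def, hDv_def]
    exact le_trans (setIntegral_mono_on hIv'2 (hIav2.const_mul (1/amin)) hS hptdv)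
      (le_of_eq (integral_const_mul _ _))
  -- the key boundary estimate
  have hkey : ∀ (S' n d D N : ℝ), 0 ≤ S' → 0 ≤ n → 0 ≤ D → 0 ≤ N →
      S' ≤ βmax * (Ctrace^2 * Real.sqrt n * Real.sqrt (n + d)) →
      n ≤ cmax^2/ω^2 * N → d ≤ 1/amin * D →
      ω * S' ≤ Ctrace^2/2 * M * (D + N) := by
    intro S' n d D N hS'0 hn0 hD0 hN0 hS'T hnN hdD
    have t4 : ω * βmax * Real.sqrt n = Real.sqrt ((ω * βmax)^2 * n) := by
      rw [Real.sqrt_mul (sq_nonneg _), Real.sqrt_sq (by positivity)]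
    have t5 : (ω * βmax)^2 * n ≤ βmax^2 * cmax^2 * N := by
      calc (ω * βmax)^2 * n ≤ (ω * βmax)^2 * (cmax^2/ω^2 * N) :=
            mul_le_mul_of_nonneg_left hnN (sq_nonneg _)
        _ = βmax^2 * cmax^2 * N := by field_simp
    have t6 : n + d ≤ cmax^2/ω^2 * N + 1/amin * D := add_le_add hnN hdD
    have t7 : (ω * βmax * Real.sqrt n) * Real.sqrt (n + d)
        ≤ Real.sqrt (βmax^2 * cmax^2 * N) * Real.sqrt (cmax^2/ω^2 * N + 1/amin * D) := by
      rw [t4]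
      exact mul_le_mul (Real.sqrt_le_sqrt t5) (Real.sqrt_le_sqrt t6)
        (Real.sqrt_nonneg _) (Real.sqrt_nonneg _)
    have t8 : Real.sqrt (βmax^2 * cmax^2 * N) * Real.sqrt (cmax^2/ω^2 * N + 1/amin * D)
        ≤ ((βmax^2 * cmax^2 * N) + (cmax^2/ω^2 * N + 1/amin * D))/2 :=
      sqrt_mul_sqrt_le_half (by positivity) (by positivity)
    have hcoef1 : (βmax^2 * cmax^2 + cmax^2/ω^2) * N ≤ M * N :=
      mul_le_mul_of_nonneg_right hM2 hN0
    have hcoef2 : 1/amin * D ≤ M * D := mul_le_mul_of_nonneg_right hM1 hD0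
    calc ω * S' ≤ ω * (βmax * (Ctrace^2 * Real.sqrt n * Real.sqrt (n + d))) :=
          mul_le_mul_of_nonneg_left hS'T hωpos.le
      _ = Ctrace^2 * ((ω * βmax * Real.sqrt n) * Real.sqrt (n + d)) := by ring
      _ ≤ Ctrace^2 * (((βmax^2 * cmax^2 * N) + (cmax^2/ω^2 * N + 1/amin * D))/2) := by
          have := le_trans t7 t8
          exact mul_le_mul_of_nonneg_left this (sq_nonneg _)
      _ ≤ Ctrace^2/2 * M * (D + N) := by
          have hh := mul_le_mul_of_nonneg_left (add_le_add hcoef1 hcoef2)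
            (by positivity : (0:ℝ) ≤ Ctrace^2/2)
          linarith only [hh]
  have hkey_u : ω * Su ≤ Ctrace^2/2 * M * (Du + Nu) := by
    refine hkey Su nu du Du Nu hSu0 hnu0 hDu0 hNu0 ?_ hnuN hduD
    refine le_trans hSuT ?_
    exact mul_le_mul_of_nonneg_left htr_u hβmax.le
  have hkey_v : ω * Sv ≤ Ctrace^2/2 * M * (Dv + Nv) := by
    refine hkey Sv nv dv Dv Nv hSv0 hnv0 hDv0 hNv0 ?_ hnvN hdvD
    refine le_trans hSvT ?_
    exact mul_le_mul_of_nonneg_left htr_v hβmax.le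
  -- assemble boundary bound
  have hbd : ‖Complex.I * (ω : ℂ) * ∑ x ∈ ΓN, ((β x : ℝ) : ℂ) * u x * (starRingEnd ℂ) (v x)‖
      ≤ Ctrace^2/2 * M * (Real.sqrt (Du + Nu) * Real.sqrt (Dv + Nv)) := by
    have e0 : ‖Complex.I * (ω : ℂ) * ∑ x ∈ ΓN, ((β x : ℝ) : ℂ) * u x * (starRingEnd ℂ) (v x)‖
        = ω * ‖∑ x ∈ ΓN, ((β x : ℝ) : ℂ) * u x * (starRingEnd ℂ) (v x)‖ := by
      simp [norm_mul, Complex.norm_real, abs_of_nonneg hωpos.le]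
    rw [e0]
    calc ω * ‖∑ x ∈ ΓN, ((β x : ℝ) : ℂ) * u x * (starRingEnd ℂ) (v x)‖
        ≤ ω * (Real.sqrt Su * Real.sqrt Sv) :=
          mul_le_mul_of_nonneg_left (hsum.trans hCSd) hωpos.le
      _ = Real.sqrt (ω * Su) * Real.sqrt (ω * Sv) := by
          rw [Real.sqrt_mul hωpos.le Su, Real.sqrt_mul hωpos.le Sv,
            show (Real.sqrt ω * Real.sqrt Su) * (Real.sqrt ω * Real.sqrt Sv)
              = (Real.sqrt ω * Real.sqrt ω) * (Real.sqrt Su * Real.sqrt Sv) by ring,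
            Real.mul_self_sqrt hωpos.le]
      _ ≤ Real.sqrt (Ctrace^2/2 * M * (Du + Nu)) * Real.sqrt (Ctrace^2/2 * M * (Dv + Nv)) :=
          mul_le_mul (Real.sqrt_le_sqrt hkey_u) (Real.sqrt_le_sqrt hkey_v)
            (Real.sqrt_nonneg _) (Real.sqrt_nonneg _)
      _ = Ctrace^2/2 * M * (Real.sqrt (Du + Nu) * Real.sqrt (Dv + Nv)) := by
          rw [Real.sqrt_mul hk0, Real.sqrt_mul hk0,
            show (Real.sqrt (Ctrace^2/2 * M) * Real.sqrt (Du + Nu))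
              * (Real.sqrt (Ctrace^2/2 * M) * Real.sqrt (Dv + Nv))
              = (Real.sqrt (Ctrace^2/2 * M) * Real.sqrt (Ctrace^2/2 * M))
                * (Real.sqrt (Du + Nu) * Real.sqrt (Dv + Nv)) by ring,
            Real.mul_self_sqrt hk0]
  -- final assembly
  have h1 : Real.sqrt Du * Real.sqrt Dv ≤ Real.sqrt (Du + Nu) * Real.sqrt (Dv + Nv) :=
    mul_le_mul (Real.sqrt_le_sqrt (le_add_of_nonneg_right hNu0))
      (Real.sqrt_le_sqrt (le_add_of_nonneg_right hNv0))
      (Real.sqrt_nonneg _) (Real.sqrt_nonneg _)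
  have h2 : Real.sqrt Nu * Real.sqrt Nv ≤ Real.sqrt (Du + Nu) * Real.sqrt (Dv + Nv) :=
    mul_le_mul (Real.sqrt_le_sqrt (le_add_of_nonneg_left hDu0))
      (Real.sqrt_le_sqrt (le_add_of_nonneg_left hDv0))
      (Real.sqrt_nonneg _) (Real.sqrt_nonneg _)
  have hP0 : 0 ≤ Real.sqrt (Du + Nu) * Real.sqrt (Dv + Nv) :=
    mul_nonneg (Real.sqrt_nonneg _) (Real.sqrt_nonneg _)
  calc ‖(∫ x in S, ((a x : ℝ) : ℂ) * u' x * (starRingEnd ℂ) (v' x)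
          - ((ω / c x : ℝ) : ℂ)^2 * u x * (starRingEnd ℂ) (v x))
        - Complex.I * (ω : ℂ) * ∑ x ∈ ΓN, ((β x : ℝ) : ℂ) * u x * (starRingEnd ℂ) (v x)‖
      ≤ ‖∫ x in S, ((a x : ℝ) : ℂ) * u' x * (starRingEnd ℂ) (v' x)
          - ((ω / c x : ℝ) : ℂ)^2 * u x * (starRingEnd ℂ) (v x)‖
        + ‖Complex.I * (ω : ℂ) * ∑ x ∈ ΓN, ((β x : ℝ) : ℂ) * u x * (starRingEnd ℂ) (v x)‖ :=
        norm_sub_le _ _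
    _ ≤ ((Real.sqrt Du * Real.sqrt Dv) + (Real.sqrt Nu * Real.sqrt Nv))
        + Ctrace^2/2 * M * (Real.sqrt (Du + Nu) * Real.sqrt (Dv + Nv)) :=
        add_le_add (hvol.trans (add_le_add key_a key_c)) hbd
    _ ≤ (3 + Ctrace^2/2 * M) * Real.sqrt (Du + Nu) * Real.sqrt (Dv + Nv) := by
        have e : (3 + Ctrace^2/2 * M) * Real.sqrt (Du + Nu) * Real.sqrt (Dv + Nv)
            = (Real.sqrt (Du + Nu) * Real.sqrt (Dv + Nv))
              + (Real.sqrt (Du + Nu) * Real.sqrt (Dv + Nv))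
              + ((Real.sqrt (Du + Nu) * Real.sqrt (Dv + Nv))
              + Ctrace^2/2 * M * (Real.sqrt (Du + Nu) * Real.sqrt (Dv + Nv))) := by ring
        rw [e]
        linarith only [h1, h2, hP0]
end

section
/- Let N be odd, let a ≡ 1, and let c be piecewise constant with respect to the partition, taking the value c_max on τ_j for odd j and c_min on τ_j for even j, where 0 < c_min < c_max. Then for every interior break point z_j (1 ≤ j ≤ N-1): α_j = 1; σ_j = (c_max/c_min)² and γ_j = 1 when j is odd; σ_j = 1 and γ_j = (c_max/c_min)² when j is even. Consequently q^-(L) ≤ 2L (c_max²/c_min²)^N. -/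
open MeasureTheory

/-- A real-valued piecewise `C¹` function with respect to the partition
`z 0 < z 1 < ... < z N` of `[z 0, z N]`: for each `j = 1, ..., N` the function agrees on
the open subinterval `(z (j-1), z j)` with a `C¹` function `piece j` (defined on the
closed subinterval, i.e. extended to `ℝ`) whose derivative is `dpiece j`,
continuous on the closed subinterval. -/
structure PW1 (N : ℕ) (z : ℕ → ℝ) where
  f : ℝ → ℝ
  piece : ℕ → ℝ → ℝ
  dpiece : ℕ → ℝ → ℝ
  smooth : ∀ j, 1 ≤ j → j ≤ N → ∀ x ∈ Set.Icc (z (j-1)) (z j),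
    HasDerivAt (piece j) (dpiece j x) x
  contd : ∀ j, 1 ≤ j → j ≤ N → ContinuousOn (dpiece j) (Set.Icc (z (j-1)) (z j))
  agree : ∀ j, 1 ≤ j → j ≤ N → ∀ x ∈ Set.Ioo (z (j-1)) (z j), f x = piece j x

namespace PW1

variable {N : ℕ} {z : ℕ → ℝ}

/-- the left (one-sided) limit `g⁻(z j)`, for `1 ≤ j ≤ N` -/
def limL (g : PW1 N z) (j : ℕ) : ℝ := g.piece j (z j)

/-- the right (one-sided) limit `g⁺(z j)`, for `0 ≤ j ≤ N-1` -/
def limR (g : PW1 N z) (j : ℕ) : ℝ := g.piece (j+1) (z j)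

/-- the jump `[g]_{z j} = g⁻(z j) - g⁺(z j)` at an interior break point -/
def jump (g : PW1 N z) (j : ℕ) : ℝ := g.limL j - g.limR j

/-- the variation `Var(g) = ∑_{j=1}^{N-1} |[g]_{z_j}| + ∫_{-L}^{L} |∂_pw g|` -/
noncomputable def var (g : PW1 N z) : ℝ :=
  (∑ j ∈ Finset.Icc 1 (N-1), |g.jump j|)
    + ∑ j ∈ Finset.Icc 1 N, ∫ s in (z (j-1))..(z j), |g.dpiece j s|

/-- the variation `Var(g²)` of the square `g²` (a piecewise `C¹` function with pieces
`(piece j)²` and regular derivative `2 ⬝ piece j ⬝ dpiece j`) -/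
noncomputable def varSq (g : PW1 N z) : ℝ :=
  (∑ j ∈ Finset.Icc 1 (N-1), |(g.limL j)^2 - (g.limR j)^2|)
    + ∑ j ∈ Finset.Icc 1 N, ∫ s in (z (j-1))..(z j), |2 * g.piece j s * g.dpiece j s|

/-- the (regular part of the) derivative of `g` is one-signed on each subinterval:
either everywhere positive or everywhere `≤ 0` -/
def OneSigned (g : PW1 N z) : Prop :=
  ∀ j, 1 ≤ j → j ≤ N →
    (∀ x ∈ Set.Ioo (z (j-1)) (z j), 0 < g.dpiece j x) ∨
      (∀ x ∈ Set.Ioo (z (j-1)) (z j), g.dpiece j x ≤ 0)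

/-- `tg` is the modified coefficient `g̃` associated with `g` : on each subinterval `τ_j`
it equals `g` if `∂_pw g > 0` on `τ_j`, and the constant `g⁺(z (j-1))` if `∂_pw g ≤ 0`
on `τ_j`. -/
def IsTilde (g tg : PW1 N z) : Prop :=
  ∀ j, 1 ≤ j → j ≤ N →
    ((∀ x ∈ Set.Ioo (z (j-1)) (z j), 0 < g.dpiece j x) ∧
        (∀ x ∈ Set.Icc (z (j-1)) (z j), tg.piece j x = g.piece j x) ∧
        (∀ x ∈ Set.Icc (z (j-1)) (z j), tg.dpiece j x = g.dpiece j x)) ∨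
    ((∀ x ∈ Set.Ioo (z (j-1)) (z j), g.dpiece j x ≤ 0) ∧
        (∀ x ∈ Set.Icc (z (j-1)) (z j), tg.piece j x = g.piece j (z (j-1))) ∧
        (∀ x ∈ Set.Icc (z (j-1)) (z j), tg.dpiece j x = 0))

/-- `α_j = max{ ã⁻(z_j)/ã⁺(z_j), 1 }` -/
noncomputable def alphaJ (ta : PW1 N z) (j : ℕ) : ℝ := max (ta.limL j / ta.limR j) 1

/-- `σ_j = max{ (c̃²)⁻(z_j)/(c̃²)⁺(z_j), 1 }` -/
noncomputable def sigmaJ (tc : PW1 N z) (j : ℕ) : ℝ := max ((tc.limL j)^2 / (tc.limR j)^2) 1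

/-- `γ_j = max{ a⁺(z_j)/a⁻(z_j), (c²)⁺(z_j)/(c²)⁻(z_j), 1 }` -/
noncomputable def gammaJ (a c : PW1 N z) (j : ℕ) : ℝ :=
  max (max (a.limR j / a.limL j) ((c.limR j)^2 / (c.limL j)^2)) 1

/-- `∫_{τ_j} 1/(ã c̃²)` -/
noncomputable def Ival (ta tc : PW1 N z) (j : ℕ) : ℝ :=
  ∫ s in (z (j-1))..(z j), 1 / (ta.piece j s * (tc.piece j s)^2)

/-- the sequence `A_1 = 0`, `A_{j+1} = α_j σ_j γ_j ( ∫_{τ_j} 1/(ã c̃²) + A_j )` -/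
noncomputable def Aseq (ta tc a c : PW1 N z) : ℕ → ℝ
  | 0 => 0
  | 1 => 0
  | (j+2) => alphaJ ta (j+1) * sigmaJ tc (j+1) * gammaJ a c (j+1)
      * (Ival ta tc (j+1) + Aseq ta tc a c (j+1))

/-- the function `q` on `τ_j` :
`q(x) = ã(x) c̃²(x) ( ∫_{z_{j-1}}^{x} 1/(ã c̃²) + A_j )` -/
noncomputable def qpiece (ta tc a c : PW1 N z) (j : ℕ) (x : ℝ) : ℝ :=
  ta.piece j x * (tc.piece j x)^2 *
    ((∫ s in (z (j-1))..x, 1 / (ta.piece j s * (tc.piece j s)^2)) + Aseq ta tc a c j)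

/-- the one-sided limit of `g` at the boundary points `z 0` and `z N` -/
noncomputable def bdry (g : PW1 N z) (x : ℝ) : ℝ :=
  if x = z 0 then g.piece 1 (z 0) else g.piece N (z N)

end PW1

/-- Example 1: for `a ≡ 1` and `c` piecewise constant taking the value
`c_max` on `τ_j` for odd `j` and `c_min` on `τ_j` for even `j` (with `N` odd and
`0 < c_min < c_max`), one has `α_j = 1` for all interior break points, `σ_j = (c_max/c_min)²`
and `γ_j = 1` for odd `j`, `σ_j = 1` and `γ_j = (c_max/c_min)²` for even `j`;
consequently `q⁻(L) ≤ 2L (c_max²/c_min²)^N`. -/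
theorem stmt18 (L : ℝ) (hL : 0 < L) (N : ℕ) (hN : 1 ≤ N) (hNodd : Odd N)
    (z : ℕ → ℝ) (hz0 : z 0 = -L) (hzN : z N = L) (hzmono : ∀ j < N, z j < z (j+1))
    (cmin cmax : ℝ) (hcmin : 0 < cmin) (hcc : cmin < cmax)
    (a c ta tc : PW1 N z)
    (hapiece : ∀ j, 1 ≤ j → j ≤ N → ∀ x ∈ Set.Icc (z (j-1)) (z j), a.piece j x = 1)
    (haderiv : ∀ j, 1 ≤ j → j ≤ N → ∀ x ∈ Set.Icc (z (j-1)) (z j), a.dpiece j x = 0)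
    (hcodd : ∀ j, 1 ≤ j → j ≤ N → Odd j →
      ∀ x ∈ Set.Icc (z (j-1)) (z j), c.piece j x = cmax)
    (hceven : ∀ j, 1 ≤ j → j ≤ N → Even j →
      ∀ x ∈ Set.Icc (z (j-1)) (z j), c.piece j x = cmin)
    (hcderiv : ∀ j, 1 ≤ j → j ≤ N → ∀ x ∈ Set.Icc (z (j-1)) (z j), c.dpiece j x = 0)
    (hta : a.IsTilde ta) (htc : c.IsTilde tc) :
    (∀ j, 1 ≤ j → j ≤ N - 1 →
      PW1.alphaJ ta j = 1 ∧
      (Odd j → PW1.sigmaJ tc j = (cmax / cmin)^2 ∧ PW1.gammaJ a c j = 1) ∧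
      (Even j → PW1.sigmaJ tc j = 1 ∧ PW1.gammaJ a c j = (cmax / cmin)^2)) ∧
    PW1.qpiece ta tc a c N (z N) ≤ 2 * L * (cmax^2 / cmin^2)^N := by
  classical
  -- basic geometry of the partition
  have hzlt : ∀ j, 1 ≤ j → j ≤ N → z (j-1) < z j := by
    intro j h1 h2
    have h := hzmono (j-1) (by omega)
    rwa [Nat.sub_add_cancel h1] at h
  have hzle : ∀ j, j ≤ N → ∀ i, i ≤ j → z i ≤ z j := by
    intro j
    induction j with
    | zero => intro _ i hi; exact le_of_eq (congrArg z (by omega))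
    | succ k ih =>
      intro hj i hi
      rcases Nat.lt_or_ge i (k+1) with h | h
      · exact le_trans (ih (by omega) i (by omega)) (hzmono k (by omega)).le
      · have : i = k + 1 := by omega
        simp [this]
  have hmid : ∀ j, 1 ≤ j → j ≤ N → (z (j-1) + z j)/2 ∈ Set.Ioo (z (j-1)) (z j) := by
    intro j h1 h2
    have := hzlt j h1 h2
    constructor <;> [linarith; linarith]
  -- the value of c on each piece
  set cval : ℕ → ℝ := fun j => if Odd j then cmax else cmin with hcvaldef
  have hcvalpos : ∀ j, 0 < cval j := by
    intro j; simp only [hcvaldef]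
    split
    · linarith
    · exact hcmin
  have hcvalge : ∀ j, cmin ≤ cval j := by
    intro j; simp only [hcvaldef]
    split
    · linarith
    · exact le_refl cmin
  have hcp : ∀ j, 1 ≤ j → j ≤ N → ∀ x ∈ Set.Icc (z (j-1)) (z j), c.piece j x = cval j := by
    intro j h1 h2 x hx
    by_cases hodd : Odd j
    · simp only [hcvaldef, if_pos hodd]; exact hcodd j h1 h2 hodd x hx
    · simp only [hcvaldef, if_neg hodd]
      exact hceven j h1 h2 (Nat.not_odd_iff_even.mp hodd) x hx
  -- tilde coefficients are constant on each piece
  have htap : ∀ j, 1 ≤ j → j ≤ N → ∀ x ∈ Set.Icc (z (j-1)) (z j), ta.piece j x = 1 := by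
    intro j h1 h2 x hx
    rcases hta j h1 h2 with ⟨hpos, _, _⟩ | ⟨_, hp, _⟩
    · have h0 := hpos _ (hmid j h1 h2)
      rw [haderiv j h1 h2 _ (Set.Ioo_subset_Icc_self (hmid j h1 h2))] at h0
      linarith
    · rw [hp x hx]
      exact hapiece j h1 h2 _ (Set.left_mem_Icc.mpr (hzlt j h1 h2).le)
  have htcp : ∀ j, 1 ≤ j → j ≤ N → ∀ x ∈ Set.Icc (z (j-1)) (z j), tc.piece j x = cval j := by
    intro j h1 h2 x hx
    rcases htc j h1 h2 with ⟨hpos, _, _⟩ | ⟨_, hp, _⟩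
    · have h0 := hpos _ (hmid j h1 h2)
      rw [hcderiv j h1 h2 _ (Set.Ioo_subset_Icc_self (hmid j h1 h2))] at h0
      linarith
    · rw [hp x hx]
      exact hcp j h1 h2 _ (Set.left_mem_Icc.mpr (hzlt j h1 h2).le)
  -- endpoint memberships
  have hmemR : ∀ j, 1 ≤ j → j ≤ N → z j ∈ Set.Icc (z (j-1)) (z j) :=
    fun j h1 h2 => Set.right_mem_Icc.mpr (hzlt j h1 h2).le
  have hmemL : ∀ j, j + 1 ≤ N → z j ∈ Set.Icc (z (j+1-1)) (z (j+1)) := by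
    intro j hj
    simp only [Nat.add_sub_cancel]
    exact Set.left_mem_Icc.mpr (hzmono j (by omega)).le
  -- one-sided limits
  have htaL : ∀ j, 1 ≤ j → j ≤ N → ta.limL j = 1 :=
    fun j h1 h2 => htap j h1 h2 _ (hmemR j h1 h2)
  have htaR : ∀ j, j + 1 ≤ N → ta.limR j = 1 :=
    fun j hj => htap (j+1) (by omega) hj _ (hmemL j hj)
  have htcL : ∀ j, 1 ≤ j → j ≤ N → tc.limL j = cval j :=
    fun j h1 h2 => htcp j h1 h2 _ (hmemR j h1 h2)
  have htcR : ∀ j, j + 1 ≤ N → tc.limR j = cval (j+1) :=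
    fun j hj => htcp (j+1) (by omega) hj _ (hmemL j hj)
  have haL : ∀ j, 1 ≤ j → j ≤ N → a.limL j = 1 :=
    fun j h1 h2 => hapiece j h1 h2 _ (hmemR j h1 h2)
  have haR : ∀ j, j + 1 ≤ N → a.limR j = 1 :=
    fun j hj => hapiece (j+1) (by omega) hj _ (hmemL j hj)
  have hcL : ∀ j, 1 ≤ j → j ≤ N → c.limL j = cval j :=
    fun j h1 h2 => hcp j h1 h2 _ (hmemR j h1 h2)
  have hcR : ∀ j, j + 1 ≤ N → c.limR j = cval (j+1) :=
    fun j hj => hcp (j+1) (by omega) hj _ (hmemL j hj)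
  -- parities
  have hcvodd : ∀ j, Odd j → cval j = cmax := fun j hj => if_pos hj
  have hcveven : ∀ j, Even j → cval j = cmin := fun j hj => if_neg (by simpa using hj)
  have hratio1 : (1:ℝ) ≤ cmax^2 / cmin^2 := by
    rw [one_le_div (show (0:ℝ) < cmin^2 by nlinarith)]
    nlinarith
  have hratio2 : cmin^2 / cmax^2 ≤ 1 := by
    rw [div_le_one (show (0:ℝ) < cmax^2 by nlinarith)]
    nlinarith
  -- part 1
  have hpart1 : ∀ j, 1 ≤ j → j ≤ N - 1 →
      PW1.alphaJ ta j = 1 ∧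
      (Odd j → PW1.sigmaJ tc j = (cmax / cmin)^2 ∧ PW1.gammaJ a c j = 1) ∧
      (Even j → PW1.sigmaJ tc j = 1 ∧ PW1.gammaJ a c j = (cmax / cmin)^2) := by
    intro j h1 h2
    have hjN : j + 1 ≤ N := by omega
    have hjN' : j ≤ N := by omega
    refine ⟨?_, ?_, ?_⟩
    · unfold PW1.alphaJ
      rw [htaL j h1 hjN', htaR j hjN]
      norm_num
    · intro hodd
      have he1 : Even (j+1) := Odd.add_one hodd
      constructor
      · unfold PW1.sigmaJ
        rw [htcL j h1 hjN', htcR j hjN, hcvodd j hodd, hcveven (j+1) he1,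
          max_eq_left hratio1, div_pow]
      · unfold PW1.gammaJ
        rw [haL j h1 hjN', haR j hjN, hcL j h1 hjN', hcR j hjN,
          hcvodd j hodd, hcveven (j+1) he1]
        rw [show (1:ℝ)/1 = 1 by norm_num, max_eq_left hratio2, max_self]
    · intro heven
      have ho1 : Odd (j+1) := Even.add_one heven
      constructor
      · unfold PW1.sigmaJ
        rw [htcL j h1 hjN', htcR j hjN, hcveven j heven, hcvodd (j+1) ho1]
        exact max_eq_right hratio2
      · unfold PW1.gammaJ
        rw [haL j h1 hjN', haR j hjN, hcL j h1 hjN', hcR j hjN,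
          hcveven j heven, hcvodd (j+1) ho1]
        rw [show (1:ℝ)/1 = 1 by norm_num, max_eq_right hratio1, max_eq_left hratio1, div_pow]
  refine ⟨hpart1, ?_⟩
  -- computing the integrals
  have hIval : ∀ j, 1 ≤ j → j ≤ N →
      PW1.Ival ta tc j = (z j - z (j-1)) * (1 / (cval j)^2) := by
    intro j h1 h2
    unfold PW1.Ival
    have heq : Set.EqOn (fun s => 1 / (ta.piece j s * (tc.piece j s)^2))
        (fun _ => 1 / (cval j)^2) (Set.uIcc (z (j-1)) (z j)) := by
      intro x hx
      rw [Set.uIcc_of_le (hzlt j h1 h2).le] at hx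
      simp only
      rw [htap j h1 h2 x hx, htcp j h1 h2 x hx, one_mul]
    rw [intervalIntegral.integral_congr heq, intervalIntegral.integral_const, smul_eq_mul]
  -- r and its properties
  set r : ℝ := (cmax / cmin)^2 with hrdef
  have hrval : cmax^2 / cmin^2 = r := by rw [hrdef, div_pow]
  have hr1 : (1:ℝ) ≤ r := by rw [hrdef, div_pow]; exact hratio1
  have hrpos : (0:ℝ) < r := by rw [hrdef]; positivity
  -- prefactor
  have hpref : ∀ j, 1 ≤ j → j ≤ N - 1 →
      PW1.alphaJ ta j * PW1.sigmaJ tc j * PW1.gammaJ a c j = r := by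
    intro j h1 h2
    obtain ⟨hα, ho, he⟩ := hpart1 j h1 h2
    rcases Nat.even_or_odd j with hev | hod
    · obtain ⟨hσ, hγ⟩ := he hev
      rw [hα, hσ, hγ, hrdef]; ring
    · obtain ⟨hσ, hγ⟩ := ho hod
      rw [hα, hσ, hγ, hrdef]; ring
  have hAsucc : ∀ j, 1 ≤ j → PW1.Aseq ta tc a c (j+1) =
      PW1.alphaJ ta j * PW1.sigmaJ tc j * PW1.gammaJ a c j
        * (PW1.Ival ta tc j + PW1.Aseq ta tc a c j) := by
    intro j h1
    obtain ⟨k, rfl⟩ : ∃ k, j = k + 1 := ⟨j - 1, by omega⟩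
    rfl
  have hcmin2 : (0:ℝ) < cmin^2 := by positivity
  have hIbound : ∀ j, 1 ≤ j → j ≤ N →
      PW1.Ival ta tc j ≤ (z j - z (j-1)) / cmin^2 := by
    intro j h1 h2
    rw [hIval j h1 h2]
    have hlen : 0 ≤ z j - z (j-1) := by linarith [hzlt j h1 h2]
    have hd : 1 / (cval j)^2 ≤ 1 / cmin^2 := by
      apply one_div_le_one_div_of_le hcmin2
      have := hcvalge j
      nlinarith
    calc (z j - z (j-1)) * (1 / (cval j)^2) ≤ (z j - z (j-1)) * (1 / cmin^2) :=
          mul_le_mul_of_nonneg_left hd hlen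
      _ = (z j - z (j-1)) / cmin^2 := by ring
  -- the key induction
  have key : ∀ j, 1 ≤ j → j ≤ N →
      PW1.Ival ta tc j + PW1.Aseq ta tc a c j ≤ r^(j-1) * ((z j - z 0) / cmin^2) := by
    intro j
    induction j with
    | zero => omega
    | succ k ih =>
      intro _ h2
      rcases Nat.eq_zero_or_pos k with rfl | hk
      · have hA1 : PW1.Aseq ta tc a c 1 = 0 := rfl
        rw [hA1, add_zero]
        simpa using hIbound 1 le_rfl h2
      · have hkN : k ≤ N - 1 := by omega
        have hkN' : k ≤ N := by omega
        have ihk := ih hk hkN'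
        have hpk : r^(k-1) * r = r^k := by
          rw [← pow_succ]
          congr 1
          omega
        have h1rk : (1:ℝ) ≤ r^k := one_le_pow₀ hr1
        have hlen : 0 ≤ z (k+1) - z k := sub_nonneg.mpr (hzmono k (by omega)).le
        have hIk1 : PW1.Ival ta tc (k+1) ≤ (z (k+1) - z k) / cmin^2 := by
          simpa using hIbound (k+1) (by omega) h2
        rw [hAsucc k hk, hpref k hk hkN]
        simp only [Nat.add_sub_cancel]
        calc PW1.Ival ta tc (k+1) + r * (PW1.Ival ta tc k + PW1.Aseq ta tc a c k)
            ≤ (z (k+1) - z k) / cmin^2 + r * (r^(k-1) * ((z k - z 0) / cmin^2)) := by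
              have := mul_le_mul_of_nonneg_left ihk hrpos.le
              linarith
          _ = (z (k+1) - z k) / cmin^2 + r^k * ((z k - z 0) / cmin^2) := by
              rw [← hpk]; ring
          _ ≤ r^k * ((z (k+1) - z k) / cmin^2) + r^k * ((z k - z 0) / cmin^2) := by
              have h0 : 0 ≤ (z (k+1) - z k) / cmin^2 := by positivity
              nlinarith
          _ = r^k * ((z (k+1) - z 0) / cmin^2) := by ring
  -- conclude
  have hBN := key N hN le_rfl
  have hq : PW1.qpiece ta tc a c N (z N) =
      ta.piece N (z N) * (tc.piece N (z N))^2
        * (PW1.Ival ta tc N + PW1.Aseq ta tc a c N) := rfl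
  have hcvN : cval N = cmax := hcvodd N hNodd
  rw [hq, htap N hN le_rfl _ (hmemR N hN le_rfl), htcp N hN le_rfl _ (hmemR N hN le_rfl),
    hcvN, one_mul]
  have hzz : z N - z 0 = 2 * L := by rw [hz0, hzN]; ring
  rw [hzz] at hBN
  have hcmax2 : (0:ℝ) ≤ cmax^2 := by positivity
  have hpN : r^(N-1) * r = r^N := by
    rw [← pow_succ]
    congr 1
    omega
  calc cmax^2 * (PW1.Ival ta tc N + PW1.Aseq ta tc a c N)
      ≤ cmax^2 * (r^(N-1) * (2 * L / cmin^2)) := mul_le_mul_of_nonneg_left hBN hcmax2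
    _ = 2 * L * (r^(N-1) * (cmax^2 / cmin^2)) := by ring
    _ = 2 * L * (r^(N-1) * r) := by rw [hrval]
    _ = 2 * L * r^N := by rw [hpN]
    _ = 2 * L * (cmax^2 / cmin^2)^N := by rw [hrval]
end

section
/- Let L > 0, let m be an even positive integer, let c ≡ 1, and let a(x) = 2 + sin(mπx/L) on [-L, L], with the partition given by z_0 = -L, z_j = (j − m − 1/2)L/m for j = 1, ..., 2m, and z_{2m+1} = L (so N = 2m + 1). Then σ_j = γ_j = 1 for all interior break points j = 1, ..., 2m; α_j = 3 when j is even and α_j = 1 when j is odd; and consequently q^-(L) ≤ 6L · 3^m. -/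
open MeasureTheory

private lemma aseq_step {N : ℕ} {z : ℕ → ℝ} (ta tc a c : PW1 N z) (j : ℕ) :
    PW1.Aseq ta tc a c (j+2) = PW1.alphaJ ta (j+1) * PW1.sigmaJ tc (j+1) *
      PW1.gammaJ a c (j+1) * (PW1.Ival ta tc (j+1) + PW1.Aseq ta tc a c (j+1)) := rfl

/-- Example 2: for `c ≡ 1` and `a(x) = 2 + sin(mπx/L)` (`m` an even
positive integer) with break points `z_j = (j − m − 1/2)L/m`, `j = 1, ..., 2m`, and
`N = 2m + 1`, one has `σ_j = γ_j = 1` for all interior break points, `α_j = 3` for even `j`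
and `α_j = 1` for odd `j`; consequently `q⁻(L) ≤ 6L · 3^m`. -/
theorem stmt19 (L : ℝ) (hL : 0 < L) (m : ℕ) (hm : 0 < m) (hmeven : Even m)
    (N : ℕ) (hN : N = 2 * m + 1)
    (z : ℕ → ℝ) (hz0 : z 0 = -L) (hzN : z N = L)
    (hzj : ∀ j, 1 ≤ j → j ≤ 2 * m → z j = (((j : ℝ) - m - 1/2) * L) / m)
    (hzmono : ∀ j < N, z j < z (j+1))
    (a c ta tc : PW1 N z)
    (hapiece : ∀ j, 1 ≤ j → j ≤ N → ∀ x ∈ Set.Icc (z (j-1)) (z j),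
      a.piece j x = 2 + Real.sin ((m : ℝ) * Real.pi * x / L))
    (haderiv : ∀ j, 1 ≤ j → j ≤ N → ∀ x ∈ Set.Icc (z (j-1)) (z j),
      a.dpiece j x = ((m : ℝ) * Real.pi / L) * Real.cos ((m : ℝ) * Real.pi * x / L))
    (hcpiece : ∀ j, 1 ≤ j → j ≤ N → ∀ x ∈ Set.Icc (z (j-1)) (z j), c.piece j x = 1)
    (hcderiv : ∀ j, 1 ≤ j → j ≤ N → ∀ x ∈ Set.Icc (z (j-1)) (z j), c.dpiece j x = 0)
    (hta : a.IsTilde ta) (htc : c.IsTilde tc) :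
    (∀ j, 1 ≤ j → j ≤ 2 * m →
      PW1.sigmaJ tc j = 1 ∧ PW1.gammaJ a c j = 1 ∧
      (Even j → PW1.alphaJ ta j = 3) ∧ (Odd j → PW1.alphaJ ta j = 1)) ∧
    PW1.qpiece ta tc a c N (z N) ≤ 6 * L * 3^m := by
  have hπ := Real.pi_pos
  have hm' : (0:ℝ) < m := by exact_mod_cast hm
  have hmne : (m:ℝ) ≠ 0 := ne_of_gt hm'
  have hLne : L ≠ 0 := ne_of_gt hL
  subst hN
  have hlt : ∀ j, 1 ≤ j → j ≤ 2*m+1 → z (j-1) < z j := by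
    intro j h1 h2
    have h := hzmono (j-1) (by omega)
    rwa [Nat.sub_add_cancel h1] at h
  have hmid : ∀ j, 1 ≤ j → j ≤ 2*m+1 → (z (j-1) + z j)/2 ∈ Set.Ioo (z (j-1)) (z j) := by
    intro j h1 h2
    have := hlt j h1 h2
    exact ⟨by linarith, by linarith⟩
  have hθz : ∀ i : ℕ, 1 ≤ i → i ≤ 2*m →
      (m:ℝ) * Real.pi * (z i) / L = ((i:ℝ) - m - 1/2) * Real.pi := by
    intro i h1 h2
    rw [hzj i h1 h2]
    field_simp
  have hθ0 : (m:ℝ) * Real.pi * (z 0) / L = -((m:ℝ) * Real.pi) := by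
    rw [hz0]
    field_simp
  have hθN : (m:ℝ) * Real.pi * (z (2*m+1)) / L = (m:ℝ) * Real.pi := by
    rw [hzN]
    field_simp
  have hsinz : ∀ i : ℕ, 1 ≤ i → i ≤ 2*m →
      Real.sin ((m:ℝ) * Real.pi * (z i) / L) = -((-1:ℝ)^i) := by
    intro i h1 h2
    rw [hθz i h1 h2]
    have e : ((i:ℝ) - m - 1/2) * Real.pi = ((((i:ℤ) - (m:ℤ) : ℤ)):ℝ) * Real.pi - Real.pi/2 := by
      push_cast; ring
    rw [e, Real.sin_int_mul_pi_sub, Real.sin_pi_div_two, mul_one, neg_inj]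
    obtain ⟨s, hs⟩ := hmeven
    rcases Nat.even_or_odd i with hie | hio
    · obtain ⟨t, ht⟩ := hie
      have h1' : Even ((i:ℤ) - (m:ℤ)) := ⟨(t:ℤ) - s, by omega⟩
      rw [h1'.neg_one_zpow, (Nat.even_iff.mpr (by omega) : Even i).neg_one_pow]
    · obtain ⟨t, ht⟩ := hio
      have h1' : Odd ((i:ℤ) - (m:ℤ)) := ⟨(t:ℤ) - s, by omega⟩
      rw [h1'.neg_one_zpow, (Nat.odd_iff.mpr (by omega) : Odd i).neg_one_pow]
  have hcos : ∀ j, 1 ≤ j → j ≤ 2*m+1 → ∀ x ∈ Set.Ioo (z (j-1)) (z j),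
      (Odd j → 0 < Real.cos ((m:ℝ) * Real.pi * x / L)) ∧
      (Even j → Real.cos ((m:ℝ) * Real.pi * x / L) < 0) := by
    intro j h1 h2 x hx
    have hcoef : 0 < (m:ℝ) * Real.pi / L := div_pos (mul_pos hm' hπ) hL
    have key : ∀ u v : ℝ, u < v → (m:ℝ) * Real.pi * u / L < (m:ℝ) * Real.pi * v / L := by
      intro u v huv
      have h := mul_lt_mul_of_pos_left huv hcoef
      calc (m:ℝ) * Real.pi * u / L = (m:ℝ) * Real.pi / L * u := by ring
        _ < (m:ℝ) * Real.pi / L * v := h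
        _ = (m:ℝ) * Real.pi * v / L := by ring
    set k : ℤ := (j:ℤ) - 1 - (m:ℤ) with hk
    have hkr : (k:ℝ) = (j:ℝ) - 1 - (m:ℝ) := by rw [hk]; push_cast; ring
    have hlow : (k:ℝ) * Real.pi - Real.pi/2 ≤ (m:ℝ) * Real.pi * (z (j-1)) / L := by
      by_cases hj1 : j = 1
      · subst hj1
        simp only [Nat.sub_self]
        rw [hθ0, hkr]
        push_cast
        linarith
      · rw [hθz (j-1) (by omega) (by omega), hkr, Nat.cast_sub h1, Nat.cast_one]
        exact le_of_eq (by ring)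
    have hhigh : (m:ℝ) * Real.pi * (z j) / L ≤ (k:ℝ) * Real.pi + Real.pi/2 := by
      by_cases hjN : j = 2*m+1
      · subst hjN
        rw [hθN, hkr]
        have e : ((2*m+1:ℕ):ℝ) - 1 - (m:ℝ) = (m:ℝ) := by push_cast; ring
        rw [e]
        linarith
      · rw [hθz j h1 (by omega), hkr]
        exact le_of_eq (by ring)
    have hx1 := key _ _ hx.1
    have hx2 := key _ _ hx.2
    have hlo : (k:ℝ) * Real.pi - Real.pi/2 < (m:ℝ) * Real.pi * x / L :=
      lt_of_le_of_lt hlow hx1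
    have hhi : (m:ℝ) * Real.pi * x / L < (k:ℝ) * Real.pi + Real.pi/2 :=
      lt_of_lt_of_le hx2 hhigh
    have hmem : (k:ℝ) * Real.pi - (m:ℝ) * Real.pi * x / L ∈
        Set.Ioo (-(Real.pi/2)) (Real.pi/2) := ⟨by linarith, by linarith⟩
    have hcp := Real.cos_pos_of_mem_Ioo hmem
    have hcosθ : Real.cos ((m:ℝ) * Real.pi * x / L) =
        (-1:ℝ)^k * Real.cos ((k:ℝ) * Real.pi - (m:ℝ) * Real.pi * x / L) := by
      have h := Real.cos_int_mul_pi_sub ((k:ℝ) * Real.pi - (m:ℝ) * Real.pi * x / L) k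
      rw [sub_sub_cancel] at h
      exact h
    obtain ⟨s, hs⟩ := hmeven
    constructor
    · intro hjo
      obtain ⟨t, ht⟩ := hjo
      have hke : Even k := ⟨(t:ℤ) - s, by omega⟩
      rw [hcosθ, hke.neg_one_zpow, one_mul]
      exact hcp
    · intro hje
      obtain ⟨t, ht⟩ := hje
      have hko : Odd k := ⟨(t:ℤ) - s - 1, by omega⟩
      rw [hcosθ, hko.neg_one_zpow]
      linarith
  have hdpos : ∀ j, 1 ≤ j → j ≤ 2*m+1 → Odd j →
      ∀ x ∈ Set.Ioo (z (j-1)) (z j), 0 < a.dpiece j x := by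
    intro j h1 h2 hjo x hx
    rw [haderiv j h1 h2 x (Set.Ioo_subset_Icc_self hx)]
    exact mul_pos (div_pos (mul_pos hm' hπ) hL) ((hcos j h1 h2 x hx).1 hjo)
  have hdneg : ∀ j, 1 ≤ j → j ≤ 2*m+1 → Even j →
      ∀ x ∈ Set.Ioo (z (j-1)) (z j), a.dpiece j x ≤ 0 := by
    intro j h1 h2 hje x hx
    rw [haderiv j h1 h2 x (Set.Ioo_subset_Icc_self hx)]
    exact le_of_lt (mul_neg_of_pos_of_neg (div_pos (mul_pos hm' hπ) hL)
      ((hcos j h1 h2 x hx).2 hje))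
  have htapO : ∀ j, 1 ≤ j → j ≤ 2*m+1 → Odd j → ∀ x ∈ Set.Icc (z (j-1)) (z j),
      ta.piece j x = a.piece j x := by
    intro j h1 h2 hjo x hx
    rcases hta j h1 h2 with ⟨_, heq, _⟩ | ⟨hneg, _, _⟩
    · exact heq x hx
    · exact absurd (hneg _ (hmid j h1 h2))
        (not_le.mpr (hdpos j h1 h2 hjo _ (hmid j h1 h2)))
  have htapE : ∀ j, 1 ≤ j → j ≤ 2*m+1 → Even j → ∀ x ∈ Set.Icc (z (j-1)) (z j),
      ta.piece j x = a.piece j (z (j-1)) := by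
    intro j h1 h2 hje x hx
    rcases hta j h1 h2 with ⟨hpos, _, _⟩ | ⟨_, heq, _⟩
    · exact absurd (hpos _ (hmid j h1 h2))
        (not_lt.mpr (hdneg j h1 h2 hje _ (hmid j h1 h2)))
    · exact heq x hx
  have htcp : ∀ j, 1 ≤ j → j ≤ 2*m+1 → ∀ x ∈ Set.Icc (z (j-1)) (z j),
      tc.piece j x = 1 := by
    intro j h1 h2 x hx
    rcases htc j h1 h2 with ⟨hpos, _, _⟩ | ⟨_, heq, _⟩
    · have h0 := hpos _ (hmid j h1 h2)
      rw [hcderiv j h1 h2 _ (Set.Ioo_subset_Icc_self (hmid j h1 h2))] at h0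
      exact absurd h0 (lt_irrefl 0)
    · rw [heq x hx, hcpiece j h1 h2 _ ⟨le_refl _, (hlt j h1 h2).le⟩]
  have hav : ∀ i, 1 ≤ i → i ≤ 2*m → ∀ jj, 1 ≤ jj → jj ≤ 2*m+1 →
      z i ∈ Set.Icc (z (jj-1)) (z jj) → a.piece jj (z i) = 2 - (-1:ℝ)^i := by
    intro i hi1 hi2 jj hj1 hj2 hmem
    rw [hapiece jj hj1 hj2 _ hmem, hsinz i hi1 hi2]
    ring
  have hmemR : ∀ j, 1 ≤ j → j ≤ 2*m+1 → z j ∈ Set.Icc (z (j-1)) (z j) :=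
    fun j h1 h2 => ⟨(hlt j h1 h2).le, le_refl _⟩
  have hmemL : ∀ j, 1 ≤ j → j ≤ 2*m+1 → z (j-1) ∈ Set.Icc (z (j-1)) (z j) :=
    fun j h1 h2 => ⟨le_refl _, (hlt j h1 h2).le⟩
  have hmemR' : ∀ j, j ≤ 2*m → z j ∈ Set.Icc (z ((j+1)-1)) (z (j+1)) := by
    intro j h2
    simp only [Nat.add_sub_cancel]
    exact ⟨le_refl _, (hlt (j+1) (by omega) (by omega)).le⟩
  have htaval : ∀ j, 1 ≤ j → j ≤ 2*m+1 → ∀ x ∈ Set.Icc (z (j-1)) (z j),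
      1 ≤ ta.piece j x ∧ ta.piece j x ≤ 3 := by
    intro j h1 h2 x hx
    rcases Nat.even_or_odd j with hje | hjo
    · rw [htapE j h1 h2 hje x hx]
      obtain ⟨t, ht⟩ := hje
      rw [hav (j-1) (by omega) (by omega) j h1 h2 (hmemL j h1 h2)]
      have hodd : Odd (j-1) := Nat.odd_iff.mpr (by omega)
      rw [hodd.neg_one_pow]
      norm_num
    · rw [htapO j h1 h2 hjo x hx, hapiece j h1 h2 x hx]
      have h1' := Real.neg_one_le_sin ((m:ℝ) * Real.pi * x / L)
      have h2' := Real.sin_le_one ((m:ℝ) * Real.pi * x / L)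
      constructor <;> linarith
  have htaLimL : ∀ j, 1 ≤ j → j ≤ 2*m → ta.limL j = 3 := by
    intro j h1 h2
    show ta.piece j (z j) = 3
    rcases Nat.even_or_odd j with hje | hjo
    · obtain ⟨t, ht⟩ := hje
      rw [htapE j h1 (by omega) ⟨t, ht⟩ _ (hmemR j h1 (by omega)),
        hav (j-1) (by omega) (by omega) j h1 (by omega) (hmemL j h1 (by omega)),
        (Nat.odd_iff.mpr (by omega) : Odd (j-1)).neg_one_pow]
      norm_num
    · rw [htapO j h1 (by omega) hjo _ (hmemR j h1 (by omega)),
        hav j h1 h2 j h1 (by omega) (hmemR j h1 (by omega)), hjo.neg_one_pow]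
      norm_num
  have htaLimRo : ∀ j, 1 ≤ j → j ≤ 2*m → Odd j → ta.limR j = 3 := by
    intro j h1 h2 hjo
    show ta.piece (j+1) (z j) = 3
    rw [htapE (j+1) (by omega) (by omega) (Odd.add_one hjo) _ (hmemR' j h2)]
    simp only [Nat.add_sub_cancel]
    rw [hav j h1 h2 (j+1) (by omega) (by omega) (hmemR' j h2), hjo.neg_one_pow]
    norm_num
  have htaLimRe : ∀ j, 1 ≤ j → j ≤ 2*m → Even j → ta.limR j = 1 := by
    intro j h1 h2 hje
    show ta.piece (j+1) (z j) = 1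
    rw [htapO (j+1) (by omega) (by omega) (Even.add_one hje) _ (hmemR' j h2),
      hav j h1 h2 (j+1) (by omega) (by omega) (hmemR' j h2), hje.neg_one_pow]
    norm_num
  have halphaO : ∀ j, 1 ≤ j → j ≤ 2*m → Odd j → PW1.alphaJ ta j = 1 := by
    intro j h1 h2 hjo
    unfold PW1.alphaJ
    rw [htaLimL j h1 h2, htaLimRo j h1 h2 hjo]
    norm_num
  have halphaE : ∀ j, 1 ≤ j → j ≤ 2*m → Even j → PW1.alphaJ ta j = 3 := by
    intro j h1 h2 hje
    unfold PW1.alphaJ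
    rw [htaLimL j h1 h2, htaLimRe j h1 h2 hje]
    norm_num
  have hsig : ∀ j, 1 ≤ j → j ≤ 2*m → PW1.sigmaJ tc j = 1 := by
    intro j h1 h2
    unfold PW1.sigmaJ PW1.limL PW1.limR
    rw [htcp j h1 (by omega) _ (hmemR j h1 (by omega)),
      htcp (j+1) (by omega) (by omega) _ (hmemR' j h2)]
    norm_num
  have hgam : ∀ j, 1 ≤ j → j ≤ 2*m → PW1.gammaJ a c j = 1 := by
    intro j h1 h2
    unfold PW1.gammaJ PW1.limL PW1.limR
    rw [hav j h1 h2 j h1 (by omega) (hmemR j h1 (by omega)),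
      hav j h1 h2 (j+1) (by omega) (by omega) (hmemR' j h2),
      hcpiece j h1 (by omega) _ (hmemR j h1 (by omega)),
      hcpiece (j+1) (by omega) (by omega) _ (hmemR' j h2)]
    have hne : (2:ℝ) - (-1:ℝ)^j ≠ 0 := by
      rcases Nat.even_or_odd j with h | h
      · rw [h.neg_one_pow]; norm_num
      · rw [h.neg_one_pow]; norm_num
    rw [div_self hne]
    norm_num
  have htacont : ∀ j, 1 ≤ j → j ≤ 2*m+1 →
      ContinuousOn (ta.piece j) (Set.Icc (z (j-1)) (z j)) :=
    fun j h1 h2 x hx => ((ta.smooth j h1 h2 x hx).continuousAt).continuousWithinAt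
  have htccont : ∀ j, 1 ≤ j → j ≤ 2*m+1 →
      ContinuousOn (tc.piece j) (Set.Icc (z (j-1)) (z j)) :=
    fun j h1 h2 x hx => ((tc.smooth j h1 h2 x hx).continuousAt).continuousWithinAt
  have hdenom : ∀ j, 1 ≤ j → j ≤ 2*m+1 → ∀ s ∈ Set.Icc (z (j-1)) (z j),
      1 ≤ ta.piece j s * (tc.piece j s)^2 := by
    intro j h1 h2 s hs
    rw [htcp j h1 h2 s hs]
    simpa using (htaval j h1 h2 s hs).1
  have hFint : ∀ j, 1 ≤ j → j ≤ 2*m+1 →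
      IntervalIntegrable (fun s => 1/(ta.piece j s * (tc.piece j s)^2))
        volume (z (j-1)) (z j) := by
    intro j h1 h2
    apply ContinuousOn.intervalIntegrable
    rw [Set.uIcc_of_le (hlt j h1 h2).le]
    apply ContinuousOn.div continuousOn_const
    · exact (htacont j h1 h2).mul ((htccont j h1 h2).pow 2)
    · intro s hs
      have := hdenom j h1 h2 s hs
      intro h0
      rw [h0] at this
      linarith
  have hlen : ∀ j, 1 ≤ j → j ≤ 2*m+1 → z j - z (j-1) ≤ L/m := by
    intro j h1 h2
    have hhalf : L/(2*(m:ℝ)) ≤ L/(m:ℝ) := by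
      rw [div_le_div_iff₀ (by linarith) hm']
      nlinarith [mul_nonneg hL.le hm'.le]
    by_cases hj1 : j = 1
    · subst hj1
      simp only [Nat.sub_self]
      have hval : z 1 - z 0 = L/(2*(m:ℝ)) := by
        rw [hz0, hzj 1 le_rfl (by omega)]
        push_cast
        field_simp
        ring
      rw [hval]
      exact hhalf
    · by_cases hjN : j = 2*m+1
      · subst hjN
        have e : 2*m+1-1 = 2*m := by omega
        rw [e]
        have hval : z (2*m+1) - z (2*m) = L/(2*(m:ℝ)) := by
          rw [hzN, hzj (2*m) (by omega) le_rfl]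
          push_cast
          field_simp
          ring
        rw [hval]
        exact hhalf
      · have hj2 : 2 ≤ j := by omega
        have hval : z j - z (j-1) = L/(m:ℝ) := by
          rw [hzj j h1 (by omega), hzj (j-1) (by omega) (by omega),
            Nat.cast_sub h1, Nat.cast_one, div_sub_div_same]
          congr 1
          ring
        rw [hval]
  have hIle : ∀ j, 1 ≤ j → j ≤ 2*m+1 → PW1.Ival ta tc j ≤ L/m := by
    intro j h1 h2
    have hle := (hlt j h1 h2).le
    have h0 : PW1.Ival ta tc j ≤ ∫ s in (z (j-1))..(z j), (1:ℝ) := by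
      unfold PW1.Ival
      apply intervalIntegral.integral_mono_on hle (hFint j h1 h2) intervalIntegrable_const
      intro s hs
      have hd := hdenom j h1 h2 s hs
      rw [div_le_one (by linarith)]
      linarith
    rw [intervalIntegral.integral_const, smul_eq_mul, mul_one] at h0
    exact h0.trans (hlen j h1 h2)
  have hInn : ∀ j, 1 ≤ j → j ≤ 2*m+1 → 0 ≤ PW1.Ival ta tc j := by
    intro j h1 h2
    unfold PW1.Ival
    apply intervalIntegral.integral_nonneg (hlt j h1 h2).le
    intro s hs
    have := hdenom j h1 h2 s hs
    exact div_nonneg zero_le_one (by linarith)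
  have hAseq : ∀ k, k ≤ m → PW1.Aseq ta tc a c (2*k+1) ≤ (L/m) * (3^(k+1) - 3) := by
    intro k
    induction k with
    | zero =>
      intro _
      norm_num [PW1.Aseq]
    | succ k ih =>
      intro hk1
      have hA := ih (by omega)
      have e : 2*(k+1)+1 = (2*k+1)+2 := by ring
      rw [e, aseq_step]
      rw [show (2*k+1)+1 = (2*k)+2 by omega, aseq_step]
      rw [show (2*k)+1 = 2*k+1 from rfl]
      have hbE : 1 ≤ 2*k+2 := by omega
      have hbE2 : 2*k+2 ≤ 2*m := by omega
      have hbO : 1 ≤ 2*k+1 := by omega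
      have hbO2 : 2*k+1 ≤ 2*m := by omega
      rw [halphaE (2*k+2) hbE hbE2 ⟨k+1, by ring⟩, hsig (2*k+2) hbE hbE2,
        hgam (2*k+2) hbE hbE2, halphaO (2*k+1) hbO hbO2 ⟨k, rfl⟩,
        hsig (2*k+1) hbO hbO2, hgam (2*k+1) hbO hbO2]
      have hI1 := hIle (2*k+1) hbO (by omega)
      have hI2 := hIle (2*k+2) hbE (by omega)
      have hp : (3:ℝ)^(k+1+1) = 3*3^(k+1) := by ring
      rw [hp]
      nlinarith [hA, hI1, hI2]
  constructor
  · intro j h1 h2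
    exact ⟨hsig j h1 h2, hgam j h1 h2, fun he => halphaE j h1 h2 he,
      fun ho => halphaO j h1 h2 ho⟩
  · have hNodd : Odd (2*m+1) := ⟨m, rfl⟩
    have hq : PW1.qpiece ta tc a c (2*m+1) (z (2*m+1)) =
        ta.piece (2*m+1) (z (2*m+1)) * (tc.piece (2*m+1) (z (2*m+1)))^2 *
        (PW1.Ival ta tc (2*m+1) + PW1.Aseq ta tc a c (2*m+1)) := rfl
    rw [hq]
    have hmem := hmemR (2*m+1) (by omega) le_rfl
    rw [htcp (2*m+1) (by omega) le_rfl _ hmem,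
      htapO (2*m+1) (by omega) le_rfl hNodd _ hmem,
      hapiece (2*m+1) (by omega) le_rfl _ hmem, hθN, Real.sin_nat_mul_pi]
    have hI := hIle (2*m+1) (by omega) le_rfl
    have hA := hAseq m le_rfl
    have hLm : 0 < L/(m:ℝ) := div_pos hL hm'
    have hLmle : L/(m:ℝ) ≤ L := by
      rw [div_le_iff₀ hm']
      nlinarith [mul_le_mul_of_nonneg_left (show (1:ℝ) ≤ (m:ℝ) from by exact_mod_cast hm) hL.le]
    have h3 : (1:ℝ) ≤ 3^m := one_le_pow₀ (by norm_num)
    have hp : (3:ℝ)^(m+1) = 3*3^m := by ring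
    rw [hp] at hA
    have h64 : (0:ℝ) ≤ 6*3^m - 4 := by linarith
    have hkey := mul_le_mul_of_nonneg_right hLmle h64
    linarith [hI, hA, hkey, hL]
end
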